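/- arXiv:2005.08955 — 2 statements merged into one kernel-verified Lean document; each statement's English description precedes it below -/
import Mathlib

section
/- Let R be a commutative unitary ring whose multiplicative semigroup has finite Erdős-Burgess constant. Then the group of units U(R) is finite. -/
/-- Product of the nonempty list `a :: l` in a semigroup. -/
def sprod {α : Type*} [Mul α] (a : α) (l : List α) : α := l.foldl (· * ·) a

/-- A list is idempotent-product free if no nonempty sublist has idempotent product. -/
def IdemProdFree {α : Type*} [Mul α] (l : List α) : Prop :=
  ∀ (a : α) (t : List α), (a :: t).Sublist l → ¬ IsIdempotentElem (sprod a t)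

/-- The Erdős–Burgess constant of a (commutative) semigroup, as an extended natural:
the supremum of `|T| + 1` over all idempotent-product free sequences `T`. -/
noncomputable def EB (α : Type*) [Mul α] : ℕ∞ :=
  ⨆ l ∈ {l : List α | IdemProdFree l}, ((l.length : ℕ∞) + 1)

lemma sprod_eq_mul_prod {M : Type*} [CommMonoid M] (a : M) (l : List M) :
    sprod a l = a * l.prod := by
  induction l generalizing a with
  | nil => simp [sprod]
  | cons b t ih =>
    simp only [sprod, List.foldl_cons, List.prod_cons] at *
    rw [ih (a * b), mul_assoc]

lemma sprod_map {M N : Type*} [Monoid M] [Monoid N] (f : M →* N) (a : M) (l : List M) :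
    sprod (f a) (l.map f) = f (sprod a l) := by
  induction l generalizing a with
  | nil => simp [sprod]
  | cons b t ih =>
    simp only [sprod, List.map_cons, List.foldl_cons] at *
    rw [← f.map_mul]
    exact ih (a * b)

lemma exists_free_list (R : Type*) [CommRing R] [Infinite Rˣ] (n : ℕ) :
    ∃ l : List Rˣ, l.length = n ∧ ∀ (a : Rˣ) (t : List Rˣ), (a :: t).Sublist l →
      sprod a t ≠ 1 := by
  induction n with
  | zero => exact ⟨[], rfl, fun a t h => by simp at h⟩
  | succ n ih =>
    obtain ⟨l, hlen, hl⟩ := ih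
    classical
    set S : Finset Rˣ :=
      (l.sublists.filterMap (fun s => match s with
        | [] => none
        | b :: t' => some (sprod b t')⁻¹)).toFinset ∪ {1} with hS
    obtain ⟨g, hg⟩ := Infinite.exists_notMem_finset S
    refine ⟨g :: l, by simp [hlen], ?_⟩
    intro a t hsub
    rcases List.sublist_cons_iff.mp hsub with h1 | ⟨r, hr, hrsub⟩
    · exact hl a t h1
    · obtain ⟨ha, ht⟩ : a = g ∧ t = r := by
        injection hr with h1 h2; exact ⟨h1, h2⟩
      subst ha; subst ht
      match t, hrsub with
      | [], _ =>
        intro h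
        simp only [sprod, List.foldl_nil] at h
        exact hg (by simp [hS, h])
      | b :: t', hrsub =>
        intro h
        apply hg
        have h1 : a * sprod b t' = 1 := by
          rw [sprod_eq_mul_prod, List.prod_cons] at h
          rw [sprod_eq_mul_prod]
          exact h
        have hgval : a = (sprod b t')⁻¹ := eq_inv_of_mul_eq_one_left h1
        have hmem : (sprod b t')⁻¹ ∈ (l.sublists.filterMap (fun s => match s with
            | [] => none
            | b :: t' => some (sprod b t')⁻¹)) :=
          List.mem_filterMap.mpr ⟨b :: t', List.mem_sublists.mpr hrsub, rfl⟩
        rw [hS, hgval]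
        exact Finset.mem_union_left _ (List.mem_toFinset.mpr hmem)

theorem stmt_8 (R : Type*) [CommRing R] (h : EB R ≠ ⊤) : Finite Rˣ := by
  by_contra hfin
  rw [not_finite_iff_infinite] at hfin
  obtain ⟨k, hk⟩ := WithTop.ne_top_iff_exists.mp h
  obtain ⟨l, hlen, hl⟩ := exists_free_list R (k + 1)
  have hfree : IdemProdFree (l.map (Units.coeHom R)) := by
    intro a t hsub hid
    obtain ⟨s, hs, heq⟩ := List.sublist_map_iff.mp hsub
    match s, hs, heq with
    | a' :: t', hs, heq =>
      simp only [List.map_cons, List.cons.injEq] at heq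
      obtain ⟨ha, ht⟩ := heq
      subst ha; subst ht
      rw [sprod_map] at hid
      have h2 : (sprod a' t') * (sprod a' t') = sprod a' t' := by
        have h' : (Units.coeHom R) (sprod a' t' * sprod a' t')
            = (Units.coeHom R) (sprod a' t') := by
          rw [map_mul]; exact hid
        exact Units.ext (by simpa using h')
      have h3 : sprod a' t' = 1 := by
        have := mul_left_cancel (a := sprod a' t') (b := sprod a' t') (c := 1)
          (by rw [mul_one]; exact h2)
        exact this
      exact hl a' t' hs h3
  have hle : (((l.map (Units.coeHom R)).length : ℕ∞) + 1) ≤ EB R :=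
    le_iSup₂ (f := fun (l : List R) (_ : l ∈ {l : List R | IdemProdFree l}) =>
      ((l.length : ℕ∞) + 1)) (l.map (Units.coeHom R)) hfree
  rw [List.length_map, hlen, ← hk] at hle
  norm_cast at hle
  exact (by omega : ¬ (k + 1 + 1 ≤ k)) (Nat.cast_le.mp hle)
end

section
/- Let R be a commutative unitary ring whose multiplicative semigroup has finite Erdős-Burgess constant. Then the Jacobson radical J(R) is finite. -/
/-!
The elements `1 + j`, `j ∈ J(R)`, are units, so an infinite Jacobson radical gives an infinite
unit group. In an infinite group one extends a product-one free sequence `l` indefinitely: append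
any `u` that is not the inverse of the product of a sublist of `l` (finitely many exclusions).
Since the only idempotent unit is `1`, a product-one free sequence of units is idempotent-product
free, so the Erdős–Burgess constant is infinite.
-/

section Group

variable {G : Type*} [Group G]

def ProdOneFree (l : List G) : Prop :=
  ∀ s : List G, s.Sublist l → s ≠ [] → s.prod ≠ 1

lemma ProdOneFree.append_singleton {l : List G} {u : G} (hl : ProdOneFree l)
    (hu : ∀ s : List G, s.Sublist l → u ≠ s.prod⁻¹) : ProdOneFree (l ++ [u]) := by
  intro s hs hne hprod
  obtain ⟨s₁, s₂, rfl, hs₁, hs₂⟩ := List.sublist_append_iff.mp hs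
  rcases List.sublist_singleton.mp hs₂ with rfl | rfl
  · rw [List.append_nil] at hne hprod
    exact hl s₁ hs₁ hne hprod
  · rw [List.prod_append, List.prod_singleton] at hprod
    exact hu s₁ hs₁ (eq_inv_of_mul_eq_one_right hprod)

lemma exists_prodOneFree_length_eq [Infinite G] (n : ℕ) :
    ∃ l : List G, ProdOneFree l ∧ l.length = n := by
  induction n with
  | zero => exact ⟨[], fun s hs hne => absurd (List.sublist_nil.mp hs) hne, rfl⟩
  | succ n ih =>
    classical
    obtain ⟨l, hl, rfl⟩ := ih
    obtain ⟨u, hu⟩ :=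
      Infinite.exists_notMem_finset (l.sublists.map fun s => s.prod⁻¹).toFinset
    refine ⟨l ++ [u], hl.append_singleton fun s hs hus => hu ?_, by simp⟩
    exact List.mem_toFinset.mpr (List.mem_map.mpr ⟨s, List.mem_sublists.mpr hs, hus.symm⟩)

end Group

section Monoid

variable {M : Type*} [Monoid M]

lemma sprod_eq_prod (a : M) (t : List M) : sprod a t = (a :: t).prod := by
  rw [List.prod_eq_foldl, List.foldl_cons, one_mul, sprod]

lemma ProdOneFree.idemProdFree_map_val {l : List Mˣ} (hl : ProdOneFree l) :
    IdemProdFree (l.map Units.val) := by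
  intro a t hsub hidem
  obtain ⟨s, hs, hst⟩ := List.sublist_map_iff.mp hsub
  have hval : sprod a t = (s.prod : M) := by
    rw [sprod_eq_prod, hst]
    exact (map_list_prod (Units.coeHom M) s).symm
  rw [hval, IsIdempotentElem.iff_eq_one_of_isUnit s.prod.isUnit, Units.val_eq_one] at hidem
  exact hl s hs (by rintro rfl; simp at hst) hidem

lemma length_add_one_le_EB {l : List M} (hl : IdemProdFree l) : (l.length : ℕ∞) + 1 ≤ EB M :=
  le_iSup₂ (f := fun (l : List M) (_ : l ∈ {l : List M | IdemProdFree l}) =>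
    (l.length : ℕ∞) + 1) l hl

lemma EB_eq_top_of_infinite_units [Infinite Mˣ] : EB M = ⊤ := by
  refine ENat.eq_top_iff_forall_ge.mpr fun n => ?_
  obtain ⟨l, hl, hlen⟩ := exists_prodOneFree_length_eq (G := Mˣ) n
  calc (n : ℕ∞) ≤ ((l.map Units.val).length : ℕ∞) + 1 := by simp [hlen]
    _ ≤ EB M := length_add_one_le_EB hl.idemProdFree_map_val

end Monoid

lemma Ideal.infinite_units_of_infinite_jacobson_bot {R : Type*} [CommRing R]
    [Infinite (Ideal.jacobson (⊥ : Ideal R))] : Infinite Rˣ := by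
  let oneAdd : Ideal.jacobson (⊥ : Ideal R) → Rˣ := fun j =>
    (by simpa using Ideal.mem_jacobson_bot.mp j.2 1 : IsUnit (j + 1 : R)).unit
  refine Infinite.of_injective oneAdd fun i j hij => Subtype.ext ?_
  simpa [oneAdd] using congrArg Units.val hij

theorem stmt_9 (R : Type*) [CommRing R] (h : EB R ≠ ⊤) :
    Finite (Ideal.jacobson (⊥ : Ideal R)) := by
  by_contra hfin
  have := not_finite_iff_infinite.mp hfin
  have := Ideal.infinite_units_of_infinite_jacobson_bot (R := R)
  exact h EB_eq_top_of_infinite_units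
end
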